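/- For every m ≥ 4, the Lie algebra 𝔤⁴_{(m,m−1)} has rank 2: there exists a 2-dimensional abelian Lie subalgebra of Der(𝔤⁴_{(m,m−1)}) all of whose elements are semisimple (diagonalizable) linear endomorphisms, and every such abelian subalgebra of semisimple derivations has dimension at most 2. -/

import Mathlib

/-!
Writing `p = (α, β)`, the diagonal endomorphism with eigenvalue `α` on `X₁`, `(j - 2)α + β` on `Xⱼ`
for `2 ≤ j ≤ 2m`, and `(2m - 3)α + 2β` on `X₂ₘ₊₁` is a derivation, since these weights are additive
along every nonzero bracket; these derivations form a 2-dimensional torus.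

Conversely, applying a derivation `D` to `⁅X₂, X₃⁆ = 0` and reading off the `X₄`-coefficient shows
that `D X₂` has no `X₁`-component. So if moreover the `X₁`-coefficient of `D X₁` and the
`X₂`-coefficient of `D X₂` vanish, `D` maps `Fⱼ = span {Xᵢ | i ≥ j}` into `Fⱼ₊₁`: indeed
`⁅Fᵢ, Fⱼ⁆ ⊆ Fᵢ₊ⱼ`, and every `Xⱼ` with `j ≥ 3` is `⁅X₁, Xⱼ₋₁⁆` or `⁅X₂, X₂ₘ₋₁⁆`. Such a `D` is
nilpotent, hence zero if it is semisimple; so these two coefficients are injective on any space of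
semisimple derivations, which therefore has dimension at most 2.
-/

open Module

/-- The `i`-th basis vector (1-indexed); `0` when out of range. -/
noncomputable def basisVec {L : Type} [AddCommGroup L] [Module ℂ L] {n : ℕ}
    (b : Basis (Fin n) ℂ L) (i : ℕ) : L :=
  if h : 1 ≤ i ∧ i ≤ n then b ⟨i - 1, by omega⟩ else 0

/-- `b` realizes the structure constants of `𝔤⁴_{(m,m-1)}`. -/
def IsG4Basis {L : Type} [LieRing L] [LieAlgebra ℂ L] (m : ℕ)
    (b : Basis (Fin (2 * m + 1)) ℂ L) : Prop :=
  ∀ a c : ℕ, a < c →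
    ⁅basisVec b a, basisVec b c⁆ =
      (if a = 1 ∧ 2 ≤ c ∧ c ≤ 2 * m - 1 then basisVec b (c + 1) else 0) +
      (if 2 ≤ a ∧ a ≤ m ∧ a + c = 2 * m + 1 then
        ((-1 : ℂ)) ^ a • basisVec b (2 * m + 1) else 0)

section LieAlgebra

variable {R L : Type*} [CommRing R] [LieRing L] [LieAlgebra R L]

def Submodule.toAbelianLieSubalgebra (S : Submodule R L)
    (hS : ∀ x ∈ S, ∀ y ∈ S, ⁅x, y⁆ = 0) : LieSubalgebra R L where
  toSubmodule := S
  lie_mem' hx hy := by rw [hS _ hx _ hy]; exact S.zero_mem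

lemma lie_mem_of_mem_span {s t : Set L} {P : Submodule R L}
    (h : ∀ x ∈ s, ∀ y ∈ t, ⁅x, y⁆ ∈ P) {v w : L}
    (hv : v ∈ Submodule.span R s) (hw : w ∈ Submodule.span R t) : ⁅v, w⁆ ∈ P := by
  have hle : Submodule.map₂ (LieModule.toEnd R L L : L →ₗ[R] Module.End R L) (Submodule.span R s)
      (Submodule.span R t) ≤ P := by
    rw [Submodule.map₂_span_span, Submodule.span_le]
    rintro _ ⟨x, hx, y, hy, rfl⟩
    exact h x hx y hy
  exact hle (Submodule.apply_mem_map₂ _ hv hw)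

def LieDerivation.ofBasis {ι : Type*} (b : Basis ι R L) (f : L →ₗ[R] L)
    (h : ∀ i j, f ⁅b i, b j⁆ = ⁅f (b i), b j⁆ + ⁅b i, f (b j)⁆) : LieDerivation R L L where
  toLinearMap := f
  leibniz' x y := by
    let leibnizDefect : L →ₗ[R] L →ₗ[R] L := LinearMap.mk₂ R
      (fun x y => f ⁅x, y⁆ - ⁅f x, y⁆ - ⁅x, f y⁆)
      (fun _ _ _ => by simp only [add_lie, map_add]; abel)
      (fun _ _ _ => by simp only [smul_lie, map_smul, smul_sub])
      (fun _ _ _ => by simp only [lie_add, map_add]; abel)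
      (fun _ _ _ => by simp only [lie_smul, map_smul, smul_sub])
    have hzero : leibnizDefect = 0 := b.ext fun i => b.ext fun j => by
      simp [leibnizDefect, h]
    have := LinearMap.congr_fun₂ hzero x y
    simp only [leibnizDefect, LinearMap.mk₂_apply, LinearMap.zero_apply] at this
    rw [← lie_skew y (f x), sub_neg_eq_add]
    linear_combination (norm := abel) this

end LieAlgebra

section LinearAlgebra

open Polynomial in
theorem Matrix.isSemisimple_toLin_diagonal {K M ι : Type*} [Field K] [AddCommGroup M]
    [Module K M] [Fintype ι] [DecidableEq ι] (b : Basis ι K M) (w : ι → K) :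
    Module.End.IsSemisimple (Matrix.toLin b b (Matrix.diagonal w)) := by
  classical
  refine Module.End.isSemisimple_of_squarefree_aeval_eq_zero
    (p := ∏ μ ∈ Finset.univ.image w, (X - C μ))
    ((separable_prod_X_sub_C_iff' (f := id)).mpr fun _ _ _ _ h => h).squarefree ?_
  refine b.ext fun i => ?_
  rw [LinearMap.zero_apply, ← Finset.prod_erase_mul _ _ (Finset.mem_image_of_mem w
    (Finset.mem_univ i)), map_mul, Module.End.mul_apply, map_sub, aeval_X, aeval_C,
    LinearMap.sub_apply, (hasEigenvector_toLin_diagonal w i b).apply_eq_smul,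
    Module.algebraMap_end_apply, sub_self, map_zero]

theorem Matrix.commute_toLin_diagonal {R M ι : Type*} [CommRing R] [AddCommGroup M]
    [Module R M] [Fintype ι] [DecidableEq ι] (b : Basis ι R M) (w w' : ι → R) :
    Commute (Matrix.toLin b b (Matrix.diagonal w)) (Matrix.toLin b b (Matrix.diagonal w')) :=
  (Matrix.commute_diagonal w w').map (Matrix.toLinAlgEquiv b)

variable {R M : Type*} [Semiring R] [AddCommMonoid M] [Module R M]

theorem Module.End.pow_apply_mem_of_forall_apply_mem {f : Module.End R M}
    {F : ℕ → Submodule R M} (hf : ∀ j, ∀ v ∈ F j, f v ∈ F (j + 1)) (n : ℕ) {v : M}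
    (hv : v ∈ F 0) : (f ^ n) v ∈ F n := by
  induction n with
  | zero => simpa using hv
  | succ n ih => rw [pow_succ', Module.End.mul_apply]; exact hf n _ ih

theorem Module.End.pow_eq_zero_of_forall_apply_mem {f : Module.End R M}
    {F : ℕ → Submodule R M} (hf : ∀ j, ∀ v ∈ F j, f v ∈ F (j + 1)) (htop : F 0 = ⊤)
    {N : ℕ} (hbot : F N = ⊥) : f ^ N = 0 :=
  LinearMap.ext fun v => by
    simpa [hbot] using pow_apply_mem_of_forall_apply_mem hf N (htop ▸ Submodule.mem_top)

theorem Submodule.finrank_le_of_disjoint_ker {K V W : Type*} [Field K] [AddCommGroup V]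
    [Module K V] [AddCommGroup W] [Module K W] [FiniteDimensional K W] {S : Submodule K V}
    {Ψ : V →ₗ[K] W} (h : Disjoint S (LinearMap.ker Ψ)) :
    Module.finrank K S ≤ Module.finrank K W :=
  LinearMap.finrank_le_finrank_of_injective (f := Ψ ∘ₗ S.subtype) <| by
    rw [← LinearMap.ker_eq_bot, eq_bot_iff]
    rintro ⟨x, hx⟩ hker
    simpa using Submodule.disjoint_def.mp h x hx hker

end LinearAlgebra

section BasisVec

variable {L : Type} [AddCommGroup L] [Module ℂ L] {n : ℕ} (b : Basis (Fin n) ℂ L)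

lemma basisVec_succ (i : Fin n) : basisVec b (i + 1) = b i :=
  dif_pos ⟨by omega, i.isLt⟩

lemma basisVec_eq_zero {j : ℕ} (h : j = 0 ∨ n < j) : basisVec b j = 0 :=
  dif_neg (by omega)

lemma repr_basisVec (i : Fin n) (k : ℕ) :
    b.repr (basisVec b k) i = if k = i + 1 then 1 else 0 := by
  by_cases hk : k = 0 ∨ n < k
  · rw [basisVec_eq_zero b hk, map_zero, if_neg (by omega), Finsupp.zero_apply]
  · obtain ⟨j, rfl⟩ : ∃ j : Fin n, k = j + 1 := ⟨⟨k - 1, by omega⟩, by simp; omega⟩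
    simp [basisVec_succ, Finsupp.single_apply, Fin.ext_iff, eq_comm]

def tailSpan (j : ℕ) : Submodule ℂ L := Submodule.span ℂ (basisVec b '' Set.Ici j)

lemma basisVec_mem_tailSpan {i j : ℕ} (h : j ≤ i) : basisVec b i ∈ tailSpan b j :=
  Submodule.subset_span ⟨i, h, rfl⟩

lemma tailSpan_zero : tailSpan b 0 = ⊤ := by
  rw [eq_top_iff, ← b.span_eq, Submodule.span_le]
  rintro _ ⟨i, rfl⟩
  exact basisVec_succ b i ▸ basisVec_mem_tailSpan b (Nat.zero_le _)

lemma tailSpan_eq_bot : tailSpan b (n + 1) = ⊥ := by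
  rw [eq_bot_iff, tailSpan, Submodule.span_le]
  rintro _ ⟨i, hi, rfl⟩
  simp [basisVec_eq_zero b (Or.inr (Set.mem_Ici.mp hi))]

lemma mem_tailSpan_of_repr {v : L} {j : ℕ}
    (h : ∀ i : Fin n, (i : ℕ) + 1 < j → b.repr v i = 0) : v ∈ tailSpan b j := by
  rw [← b.sum_repr v]
  refine Submodule.sum_mem _ fun i _ => ?_
  by_cases hij : (i : ℕ) + 1 < j
  · simp [h i hij]
  · exact Submodule.smul_mem _ _ (basisVec_succ b i ▸ basisVec_mem_tailSpan b (by omega))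

lemma tailSpan_anti {i j : ℕ} (h : i ≤ j) : tailSpan b j ≤ tailSpan b i :=
  Submodule.span_mono (Set.image_mono (Set.Ici_subset_Ici.mpr h))

lemma apply_mem_tailSpan_succ {f : L →ₗ[ℂ] L}
    (hf : ∀ i, f (basisVec b i) ∈ tailSpan b (i + 1)) {j : ℕ} {v : L}
    (hv : v ∈ tailSpan b j) : f v ∈ tailSpan b (j + 1) := by
  suffices tailSpan b j ≤ (tailSpan b (j + 1)).comap f from this hv
  rw [tailSpan, Submodule.span_le]
  rintro _ ⟨i, hi, rfl⟩
  exact tailSpan_anti b (by simpa using hi) (hf i)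

end BasisVec

def g4Weight (m : ℕ) (p : ℂ × ℂ) (j : ℕ) : ℂ :=
  if j = 1 then p.1
  else if j = 2 * m + 1 then (2 * m - 3) * p.1 + 2 * p.2
  else ((j : ℂ) - 2) * p.1 + p.2

lemma g4Weight_add (m : ℕ) (p q : ℂ × ℂ) (j : ℕ) :
    g4Weight m (p + q) j = g4Weight m p j + g4Weight m q j := by
  unfold g4Weight; split_ifs <;> simp only [Prod.fst_add, Prod.snd_add] <;> ring

lemma g4Weight_smul (m : ℕ) (t : ℂ) (p : ℂ × ℂ) (j : ℕ) :
    g4Weight m (t • p) j = t * g4Weight m p j := by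
  unfold g4Weight; split_ifs <;> simp only [Prod.smul_fst, Prod.smul_snd, smul_eq_mul] <;> ring

lemma g4Weight_succ {m c : ℕ} (p : ℂ × ℂ) (h2 : 2 ≤ c) (h : c ≤ 2 * m - 1) :
    g4Weight m p (c + 1) = g4Weight m p 1 + g4Weight m p c := by
  simp only [g4Weight, if_neg (show c + 1 ≠ 1 by omega), if_neg (show c + 1 ≠ 2 * m + 1 by omega),
    if_neg (show c ≠ 1 by omega), if_neg (show c ≠ 2 * m + 1 by omega), ↓reduceIte]
  push_cast; ring

lemma g4Weight_last {m a c : ℕ} (p : ℂ × ℂ) (ha : 2 ≤ a) (hc : 2 ≤ c) (h : a + c = 2 * m + 1) :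
    g4Weight m p (2 * m + 1) = g4Weight m p a + g4Weight m p c := by
  simp only [g4Weight, if_neg (show 2 * m + 1 ≠ 1 by omega), ↓reduceIte,
    if_neg (show a ≠ 1 by omega), if_neg (show a ≠ 2 * m + 1 by omega),
    if_neg (show c ≠ 1 by omega), if_neg (show c ≠ 2 * m + 1 by omega)]
  have : (a : ℂ) + c = 2 * m + 1 := by exact_mod_cast h
  linear_combination (-p.1) * this

section WeightEnd

variable {L : Type} [LieRing L] [LieAlgebra ℂ L] {m : ℕ} (b : Basis (Fin (2 * m + 1)) ℂ L)

noncomputable def weightEnd (p : ℂ × ℂ) : Module.End ℂ L :=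
  Matrix.toLin b b (Matrix.diagonal fun i => g4Weight m p (i + 1))

lemma weightEnd_basisVec (p : ℂ × ℂ) (j : ℕ) :
    weightEnd b p (basisVec b j) = g4Weight m p j • basisVec b j := by
  by_cases hj : j = 0 ∨ 2 * m + 1 < j
  · simp [basisVec_eq_zero b hj]
  · obtain ⟨i, rfl⟩ : ∃ i : Fin (2 * m + 1), j = i + 1 := ⟨⟨j - 1, by omega⟩, by simp; omega⟩
    rw [basisVec_succ]
    exact (hasEigenvector_toLin_diagonal _ i b).apply_eq_smul

lemma weightEnd_add (p q : ℂ × ℂ) : weightEnd b (p + q) = weightEnd b p + weightEnd b q :=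
  b.ext fun i => by
    simp only [LinearMap.add_apply, ← basisVec_succ, weightEnd_basisVec, g4Weight_add, add_smul]

lemma weightEnd_smul (t : ℂ) (p : ℂ × ℂ) : weightEnd b (t • p) = t • weightEnd b p :=
  b.ext fun i => by
    simp only [LinearMap.smul_apply, ← basisVec_succ, weightEnd_basisVec, g4Weight_smul, smul_smul]

lemma weightEnd_commute (p q : ℂ × ℂ) : Commute (weightEnd b p) (weightEnd b q) :=
  Matrix.commute_toLin_diagonal b _ _

end WeightEnd

namespace IsG4Basis

variable {L : Type} [LieRing L] [LieAlgebra ℂ L] {m : ℕ} {b : Basis (Fin (2 * m + 1)) ℂ L}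
  (hb : IsG4Basis m b)
include hb

lemma lie_basisVec (a c : ℕ) :
    ⁅basisVec b a, basisVec b c⁆ =
      (if a = 1 ∧ 2 ≤ c ∧ c ≤ 2 * m - 1 then basisVec b (c + 1) else 0) +
      (if c = 1 ∧ 2 ≤ a ∧ a ≤ 2 * m - 1 then -basisVec b (a + 1) else 0) +
      (if 2 ≤ a ∧ 2 ≤ c ∧ a + c = 2 * m + 1 then
        ((-1 : ℂ)) ^ a • basisVec b (2 * m + 1) else 0) := by
  rcases lt_trichotomy a c with h | rfl | h
  · rw [hb a c h]
    split_ifs <;> first | omega | simp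
  · simp only [lie_self]
    split_ifs <;> first | omega | simp
  · rw [← lie_skew, hb c a h]
    have hsign (hac : a + c = 2 * m + 1) : (-1 : ℂ) ^ c = -(-1) ^ a := by
      rcases Nat.even_or_odd a with ⟨k, hk⟩ | ⟨k, hk⟩
      · rw [Even.neg_one_pow ⟨k, hk⟩, Odd.neg_one_pow ⟨m - k, by omega⟩]
      · rw [Odd.neg_one_pow ⟨k, hk⟩, Even.neg_one_pow ⟨m - k, by omega⟩, neg_neg]
    split_ifs <;> first | omega | simp [hsign (by omega)] | simp

lemma weightEnd_lie_basisVec (p : ℂ × ℂ) (a c : ℕ) :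
    weightEnd b p ⁅basisVec b a, basisVec b c⁆ =
      (g4Weight m p a + g4Weight m p c) • ⁅basisVec b a, basisVec b c⁆ := by
  rw [hb.lie_basisVec, map_add, map_add, smul_add, smul_add]
  congr 1; congr 1
  · split_ifs with h
    · rw [weightEnd_basisVec, h.1, g4Weight_succ p h.2.1 h.2.2]
    · simp
  · split_ifs with h
    · rw [map_neg, weightEnd_basisVec, h.1, g4Weight_succ p h.2.1 h.2.2, add_comm, smul_neg]
    · simp
  · split_ifs with h
    · rw [map_smul, weightEnd_basisVec, g4Weight_last p h.1 h.2.1 h.2.2, smul_comm]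
    · simp

noncomputable def weightDerivation : ℂ × ℂ →ₗ[ℂ] LieDerivation ℂ L L where
  toFun p := LieDerivation.ofBasis b (weightEnd b p) fun i k => by
    rw [← basisVec_succ, ← basisVec_succ, weightEnd_basisVec, weightEnd_basisVec, smul_lie,
      lie_smul, ← add_smul]
    exact hb.weightEnd_lie_basisVec p _ _
  map_add' p q := LieDerivation.ext fun x => LinearMap.congr_fun (weightEnd_add b p q) x
  map_smul' t p := LieDerivation.ext fun x => LinearMap.congr_fun (weightEnd_smul b t p) x

lemma weightDerivation_apply (p : ℂ × ℂ) (x : L) : hb.weightDerivation p x = weightEnd b p x :=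
  rfl

lemma lie_weightDerivation (p q : ℂ × ℂ) : ⁅hb.weightDerivation p, hb.weightDerivation q⁆ = 0 :=
  LieDerivation.ext fun x => by
    rw [LieDerivation.commutator_apply, weightDerivation_apply, weightDerivation_apply,
      weightDerivation_apply, weightDerivation_apply, LieDerivation.zero_apply, sub_eq_zero]
    exact LinearMap.congr_fun (weightEnd_commute b p q).eq x

lemma isSemisimple_weightDerivation (p : ℂ × ℂ) :
    Module.End.IsSemisimple (LieDerivation.toLinearMap (hb.weightDerivation p)) :=
  Matrix.isSemisimple_toLin_diagonal b _

lemma weightDerivation_injective (hm : 1 ≤ m) : Function.Injective hb.weightDerivation := by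
  refine (injective_iff_map_eq_zero _).mpr fun p hp => ?_
  have hX (i : Fin (2 * m + 1)) : g4Weight m p (i + 1) = 0 := by
    have := LieDerivation.congr_fun hp (basisVec b (i + 1))
    rw [weightDerivation_apply, weightEnd_basisVec, LieDerivation.zero_apply, basisVec_succ] at this
    exact (smul_eq_zero.mp this).resolve_right (b.ne_zero i)
  have h1 := hX ⟨0, by omega⟩
  have h2 := hX ⟨1, by omega⟩
  simp only [g4Weight, zero_add, Nat.reduceAdd, ↓reduceIte, if_neg (show 2 ≠ 2 * m + 1 by omega)]
    at h1 h2
  exact Prod.ext h1 (by simpa using h2)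

lemma lie_basisVec_mem_tailSpan (a c : ℕ) :
    ⁅basisVec b a, basisVec b c⁆ ∈ tailSpan b (a + c) := by
  rw [hb.lie_basisVec]
  refine add_mem (add_mem ?_ ?_) ?_ <;> split_ifs with h
  all_goals first
    | exact zero_mem _
    | exact neg_mem (basisVec_mem_tailSpan b (by omega))
    | exact Submodule.smul_mem _ _ (basisVec_mem_tailSpan b (by omega))
    | exact basisVec_mem_tailSpan b (by omega)

lemma lie_mem_tailSpan {i j : ℕ} {v w : L} (hv : v ∈ tailSpan b i) (hw : w ∈ tailSpan b j) :
    ⁅v, w⁆ ∈ tailSpan b (i + j) := by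
  refine lie_mem_of_mem_span ?_ hv hw
  rintro _ ⟨a, ha, rfl⟩ _ ⟨c, hc, rfl⟩
  exact tailSpan_anti b (add_le_add ha hc) (hb.lie_basisVec_mem_tailSpan a c)

lemma derivation_lie_mem_tailSpan (D : LieDerivation ℂ L L) {x y : L} {i j : ℕ}
    (hx : x ∈ tailSpan b i) (hDx : D x ∈ tailSpan b (i + 1))
    (hy : y ∈ tailSpan b j) (hDy : D y ∈ tailSpan b (j + 1)) :
    D ⁅x, y⁆ ∈ tailSpan b (i + j + 1) := by
  have hxDy := hb.lie_mem_tailSpan hx hDy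
  have hDxy := hb.lie_mem_tailSpan hDx hy
  rw [← add_assoc] at hxDy
  rw [add_right_comm] at hDxy
  rw [D.apply_lie_eq_add]
  exact add_mem hxDy hDxy

lemma lie_basisVec_one {j : ℕ} (h2 : 2 ≤ j) (h : j ≤ 2 * m - 1) :
    ⁅basisVec b 1, basisVec b j⁆ = basisVec b (j + 1) := by
  rw [hb 1 j (by omega), if_pos ⟨rfl, h2, h⟩, if_neg (by omega), add_zero]

lemma lie_basisVec_two_eq_last (hm : 2 ≤ m) :
    ⁅basisVec b 2, basisVec b (2 * m - 1)⁆ = basisVec b (2 * m + 1) := by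
  rw [hb 2 (2 * m - 1) (by omega), if_neg (by omega), if_pos ⟨le_rfl, hm, by omega⟩]
  simp

lemma repr_lie_basisVec_two (hm : 2 ≤ m) (v : L) :
    b.repr ⁅basisVec b 2, v⁆ ⟨3, by omega⟩ = 0 := by
  have : (b.coord ⟨3, by omega⟩).comp (LieModule.toEnd ℂ L L (basisVec b 2)) = 0 :=
    b.ext fun i => by
      simp only [LinearMap.comp_apply, LieModule.toEnd_apply_apply, Basis.coord_apply,
        LinearMap.zero_apply, ← basisVec_succ, hb.lie_basisVec]
      split_ifs <;> simp only [repr_basisVec, map_add, map_neg, map_smul, map_zero,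
        Finsupp.add_apply, Finsupp.neg_apply, Finsupp.smul_apply, Finsupp.zero_apply] <;>
        (try split_ifs) <;> first | omega | norm_num
  simpa using LinearMap.congr_fun this v

lemma repr_lie_basisVec_three (hm : 2 ≤ m) (v : L) :
    b.repr ⁅v, basisVec b 3⁆ ⟨3, by omega⟩ = b.repr v ⟨0, by omega⟩ := by
  have : (b.coord ⟨3, by omega⟩).comp (LieModule.toEnd ℂ L L (basisVec b 3)) =
      -b.coord ⟨0, by omega⟩ :=
    b.ext fun i => by
      simp only [LinearMap.comp_apply, LinearMap.neg_apply, LieModule.toEnd_apply_apply,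
        Basis.coord_apply, ← basisVec_succ, hb.lie_basisVec]
      split_ifs <;> simp only [repr_basisVec, map_add, map_neg, map_smul, map_zero,
        Finsupp.add_apply, Finsupp.neg_apply, Finsupp.smul_apply, Finsupp.zero_apply] <;>
        (try split_ifs) <;> first | omega | norm_num
  rw [← lie_skew, map_neg, Finsupp.neg_apply, neg_eq_iff_eq_neg]
  simpa using LinearMap.congr_fun this v

lemma repr_derivation_basisVec_two (hm : 3 ≤ m) (D : LieDerivation ℂ L L) :
    b.repr (D (basisVec b 2)) ⟨0, by omega⟩ = 0 := by
  have h23 : ⁅basisVec b 2, basisVec b 3⁆ = 0 := by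
    rw [hb 2 3 (by omega), if_neg (by omega), if_neg (by omega), add_zero]
  have := congrArg (b.repr · ⟨3, by omega⟩) (D.apply_lie_eq_add (basisVec b 2) (basisVec b 3))
  simpa [h23, hb.repr_lie_basisVec_two (by omega), hb.repr_lie_basisVec_three (by omega)]
    using this.symm

lemma derivation_basisVec_mem_tailSpan (hm : 3 ≤ m) (D : LieDerivation ℂ L L)
    (h1 : b.repr (D (basisVec b 1)) ⟨0, by omega⟩ = 0)
    (h2 : b.repr (D (basisVec b 2)) ⟨1, by omega⟩ = 0) (j : ℕ) :
    D (basisVec b j) ∈ tailSpan b (j + 1) := by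
  induction j using Nat.strong_induction_on with
  | _ j ih =>
  rcases (by omega : j = 0 ∨ j = 1 ∨ j = 2 ∨ (3 ≤ j ∧ j ≤ 2 * m) ∨ j = 2 * m + 1 ∨ 2 * m + 1 < j)
    with rfl | rfl | rfl | hj | rfl | hj
  · simp [basisVec_eq_zero b (Or.inl rfl)]
  · refine mem_tailSpan_of_repr b fun i hi => ?_
    rwa [show i = ⟨0, by omega⟩ from Fin.ext (show (i : ℕ) = 0 by omega)]
  · refine mem_tailSpan_of_repr b fun i hi => ?_
    rcases (by omega : (i : ℕ) = 0 ∨ (i : ℕ) = 1) with hi | hi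
    · rw [show i = ⟨0, by omega⟩ from Fin.ext hi]
      exact hb.repr_derivation_basisVec_two hm D
    · rwa [show i = ⟨1, by omega⟩ from Fin.ext hi]
  · obtain ⟨k, rfl⟩ : ∃ k, j = k + 1 := ⟨j - 1, by omega⟩
    rw [← hb.lie_basisVec_one (by omega) (by omega), show k + 1 + 1 = 1 + k + 1 by omega]
    exact hb.derivation_lie_mem_tailSpan D (basisVec_mem_tailSpan b le_rfl) (ih 1 (by omega))
      (basisVec_mem_tailSpan b le_rfl) (ih k (by omega))
  · rw [← hb.lie_basisVec_two_eq_last (by omega), show 2 * m + 1 + 1 = 2 + (2 * m - 1) + 1 by omega]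
    exact hb.derivation_lie_mem_tailSpan D (basisVec_mem_tailSpan b le_rfl) (ih 2 (by omega))
      (basisVec_mem_tailSpan b le_rfl) (ih (2 * m - 1) (by omega))
  · simp [basisVec_eq_zero b (Or.inr hj)]

lemma isNilpotent_derivation (hm : 3 ≤ m) (D : LieDerivation ℂ L L)
    (h1 : b.repr (D (basisVec b 1)) ⟨0, by omega⟩ = 0)
    (h2 : b.repr (D (basisVec b 2)) ⟨1, by omega⟩ = 0) :
    IsNilpotent (D : Module.End ℂ L) :=
  ⟨2 * m + 2, Module.End.pow_eq_zero_of_forall_apply_mem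
    (fun _ _ hv => apply_mem_tailSpan_succ b (hb.derivation_basisVec_mem_tailSpan hm D h1 h2) hv)
    (tailSpan_zero b) (tailSpan_eq_bot b)⟩

theorem finrank_le_two (hm : 3 ≤ m) (T : Submodule ℂ (LieDerivation ℂ L L))
    (hT : ∀ D ∈ T, Module.End.IsSemisimple (LieDerivation.toLinearMap D)) :
    finrank ℂ T ≤ 2 := by
  let diagCoeffs : LieDerivation ℂ L L →ₗ[ℂ] ℂ × ℂ :=
    { toFun D := (b.repr (D (basisVec b 1)) ⟨0, by omega⟩, b.repr (D (basisVec b 2)) ⟨1, by omega⟩)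
      map_add' _ _ := by simp
      map_smul' _ _ := by simp }
  refine (Submodule.finrank_le_of_disjoint_ker (Ψ := diagCoeffs) <|
    Submodule.disjoint_def.mpr fun D hD hD0 => ?_).trans (by simp)
  obtain ⟨h1, h2⟩ := Prod.ext_iff.mp hD0
  have := Module.End.eq_zero_of_isNilpotent_isSemisimple
    (hb.isNilpotent_derivation hm D h1 h2) (hT D hD)
  exact LieDerivation.ext fun x => LinearMap.congr_fun this x

end IsG4Basis

theorem stmt_10 (L : Type) [LieRing L] [LieAlgebra ℂ L] (m : ℕ) (hm : 4 ≤ m)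
    (b : Basis (Fin (2 * m + 1)) ℂ L) (hb : IsG4Basis m b) :
    (∃ T : LieSubalgebra ℂ (LieDerivation ℂ L L),
      (∀ f ∈ T, ∀ g ∈ T, ⁅f, g⁆ = 0) ∧
      (∀ f ∈ T, Module.End.IsSemisimple (LieDerivation.toLinearMap f)) ∧
      finrank ℂ T = 2) ∧
    (∀ T : LieSubalgebra ℂ (LieDerivation ℂ L L),
      (∀ f ∈ T, ∀ g ∈ T, ⁅f, g⁆ = 0) →
      (∀ f ∈ T, Module.End.IsSemisimple (LieDerivation.toLinearMap f)) →
      finrank ℂ T ≤ 2) := by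
  have hcomm : ∀ f ∈ LinearMap.range hb.weightDerivation,
      ∀ g ∈ LinearMap.range hb.weightDerivation, ⁅f, g⁆ = 0 := by
    rintro _ ⟨p, rfl⟩ _ ⟨q, rfl⟩
    exact hb.lie_weightDerivation p q
  refine ⟨⟨(LinearMap.range hb.weightDerivation).toAbelianLieSubalgebra hcomm, hcomm, ?_, ?_⟩,
    fun T _ hT => hb.finrank_le_two (by omega) T.toSubmodule hT⟩
  · rintro _ ⟨p, rfl⟩
    exact hb.isSemisimple_weightDerivation p
  · exact (LinearMap.finrank_range_of_inj (hb.weightDerivation_injective (by omega))).trans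
      (by simp)
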